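/- arXiv:1906.05089 — 2 statements merged into one kernel-verified Lean document; each statement's English description precedes it below -/
import Mathlib

section
/- For every integer n ≥ 3, the broadcast irredundance number of the cycle C_n equals its broadcast domination number and both equal ⌈n/3⌉, i.e. ir_b(C_n) = γ_b(C_n) = ⌈n/3⌉. -/
open SimpleGraph

namespace Broadcast

variable {V : Type*} [Fintype V]

/-- The eccentricity of a vertex: the maximum distance from `v` to any vertex. -/
noncomputable def ecc (G : SimpleGraph V) (v : V) : ℕ :=
  Finset.univ.sup fun u => G.dist v u

/-- A broadcast on `G`: `f v ≤ e_G(v)` for every vertex `v`. -/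
def IsBroadcast (G : SimpleGraph V) (f : V → ℕ) : Prop :=
  ∀ v, f v ≤ ecc G v

/-- The cost of a broadcast. -/
def cost (f : V → ℕ) : ℕ := ∑ v, f v

/-- `hears G f u` is H_f(u): the set of f-broadcast vertices `v` with `d(u,v) ≤ f v`. -/
def hears (G : SimpleGraph V) (f : V → ℕ) (u : V) : Set V :=
  {v | 1 ≤ f v ∧ G.dist u v ≤ f v}

/-- A dominating broadcast: every vertex hears some broadcast vertex. -/
def IsDominating (G : SimpleGraph V) (f : V → ℕ) : Prop :=
  IsBroadcast G f ∧ ∀ u, (hears G f u).Nonempty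

/-- A minimal dominating broadcast. -/
def IsMinimalDominating (G : SimpleGraph V) (f : V → ℕ) : Prop :=
  IsDominating G f ∧ ∀ g, IsDominating G g → (∀ v, g v ≤ f v) → g = f

/-- The broadcast domination number γ_b: minimum cost of a dominating broadcast. -/
noncomputable def broadcastDomination (G : SimpleGraph V) : ℕ :=
  sInf {c | ∃ f, IsDominating G f ∧ cost f = c}

/-- The upper broadcast domination number Γ_b: maximum cost of a minimal dominating broadcast. -/
noncomputable def upperBroadcastDomination (G : SimpleGraph V) : ℕ :=
  sSup {c | ∃ f, IsMinimalDominating G f ∧ cost f = c}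

/-- The private f-neighborhood PN_f(v): vertices hearing only `v`. -/
def privateNbhd (G : SimpleGraph V) (f : V → ℕ) (v : V) : Set V :=
  {u | hears G f u = {v}}

open Classical in
/-- The private f-border PB_f(v). -/
noncomputable def privateBorder (G : SimpleGraph V) (f : V → ℕ) (v : V) : Set V :=
  if f v = 1 ∧ privateNbhd G f v = {v} then {v}
  else {u | u ∈ privateNbhd G f v ∧ G.dist u v = f v}

/-- An irredundant broadcast: every broadcast vertex has a nonempty private border. -/
def IsIrredundant (G : SimpleGraph V) (f : V → ℕ) : Prop :=
  IsBroadcast G f ∧ ∀ v, 1 ≤ f v → (privateBorder G f v).Nonempty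

/-- A maximal irredundant broadcast. -/
def IsMaximalIrredundant (G : SimpleGraph V) (f : V → ℕ) : Prop :=
  IsIrredundant G f ∧ ∀ g, IsIrredundant G g → (∀ v, f v ≤ g v) → g = f

/-- The upper broadcast irredundance number IR_b: maximum cost of an irredundant broadcast. -/
noncomputable def upperBroadcastIrredundance (G : SimpleGraph V) : ℕ :=
  sSup {c | ∃ f, IsIrredundant G f ∧ cost f = c}

/-- The broadcast irredundance number ir_b: minimum cost of a maximal irredundant broadcast. -/
noncomputable def broadcastIrredundance (G : SimpleGraph V) : ℕ :=
  sInf {c | ∃ f, IsMaximalIrredundant G f ∧ cost f = c}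

/-- An independent broadcast: every broadcast vertex hears only itself, i.e. |H_f(v)| = 1. -/
def IsIndependent (G : SimpleGraph V) (f : V → ℕ) : Prop :=
  IsBroadcast G f ∧ ∀ v, 1 ≤ f v → hears G f v = {v}

/-- A maximal independent broadcast. -/
def IsMaximalIndependent (G : SimpleGraph V) (f : V → ℕ) : Prop :=
  IsIndependent G f ∧ ∀ g, IsIndependent G g → (∀ v, f v ≤ g v) → g = f

/-- The broadcast independence number β_b: maximum cost of an independent broadcast. -/
noncomputable def broadcastIndependence (G : SimpleGraph V) : ℕ :=
  sSup {c | ∃ f, IsIndependent G f ∧ cost f = c}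

/-- The lower broadcast independence number i_b: minimum cost of a maximal independent broadcast. -/
noncomputable def lowerBroadcastIndependence (G : SimpleGraph V) : ℕ :=
  sInf {c | ∃ f, IsMaximalIndependent G f ∧ cost f = c}

/-- A packing broadcast: every vertex hears at most one broadcast vertex. -/
def IsPacking (G : SimpleGraph V) (f : V → ℕ) : Prop :=
  IsBroadcast G f ∧ ∀ u, (hears G f u).Subsingleton

/-- A maximal packing broadcast. -/
def IsMaximalPacking (G : SimpleGraph V) (f : V → ℕ) : Prop :=
  IsPacking G f ∧ ∀ g, IsPacking G g → (∀ v, f v ≤ g v) → g = f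

/-- The broadcast packing number P_b: maximum cost of a packing broadcast. -/
noncomputable def broadcastPacking (G : SimpleGraph V) : ℕ :=
  sSup {c | ∃ f, IsPacking G f ∧ cost f = c}

/-- The lower broadcast packing number p_b: minimum cost of a maximal packing broadcast. -/
noncomputable def lowerBroadcastPacking (G : SimpleGraph V) : ℕ :=
  sInf {c | ∃ f, IsMaximalPacking G f ∧ cost f = c}

end Broadcast


/-!
Broadcasting with strength `1` from every third vertex dominates `C_n` at cost `⌈n/3⌉`.
Shrinking a dominating broadcast to a minimal dominating one yields an irredundant broadcast, and
a dominating irredundant broadcast is maximal irredundant; hence `ir_b ≤ γ_b ≤ ⌈n/3⌉`.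

For the reverse bound let `f` be maximal irredundant on a connected graph of maximum degree `2`.
Balls of radius `r` have at most `2r + 1` vertices, so `∑ᵤ |H_f(u)| ≤ ∑ᵥ (2 f(v) + 1)`, the
second sum running over the broadcast vertices. If `u` hears nothing, raising `f(u)` to `1` must
empty the private border of some broadcast vertex `v`, so that border lies next to `u`. A border
vertex has a neighbour closer to `v`, which hears `v`, and only one other neighbour: hence `v`
determines `u`. Moreover `v` either has `f(v) ≥ 2` or hears a second broadcast vertex, and
charging `u` to this surplus gives `n ≤ 3 σ(f)`.
-/

namespace SimpleGraph

open Finset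

variable {V : Type*} {G : SimpleGraph V}

theorem Connected.exists_adj_dist_add_one_eq (hG : G.Connected) {u v : V} (huv : u ≠ v) :
    ∃ w, G.Adj u w ∧ G.dist w v + 1 = G.dist u v := by
  obtain ⟨p, hp⟩ := hG.exists_walk_length_eq_dist u v
  cases p with
  | nil => exact absurd rfl huv
  | cons hadj q =>
    refine ⟨_, hadj, le_antisymm ?_ ?_⟩
    · rw [← hp, Walk.length_cons]
      exact Nat.add_le_add_right (dist_le q) 1
    · calc G.dist u v ≤ G.dist u _ + G.dist _ v := hG.dist_triangle
        _ = G.dist _ v + 1 := by rw [dist_eq_one_iff_adj.mpr hadj, add_comm]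

theorem Connected.dist_le_one_iff (hG : G.Connected) {u v : V} :
    G.dist u v ≤ 1 ↔ u = v ∨ G.Adj u v := by
  rw [Nat.le_one_iff_eq_zero_or_eq_one, hG.dist_eq_zero_iff, dist_eq_one_iff_adj]

variable [Fintype V] [DecidableRel G.Adj]

theorem eq_or_eq_of_adj_of_degree_le_two {y a b c : V} (hy : G.degree y ≤ 2) (ha : G.Adj y a)
    (hb : G.Adj y b) (hc : G.Adj y c) (hab : a ≠ b) : c = a ∨ c = b := by
  classical
  by_contra! h
  have hsub : ({a, b, c} : Finset V) ⊆ G.neighborFinset y := by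
    simp [insert_subset_iff, ha, hb, hc]
  have := card_le_card hsub
  rw [card_eq_three.mpr ⟨a, b, c, hab, h.1.symm, h.2.symm, rfl⟩,
    card_neighborFinset_eq_degree] at this
  omega

theorem card_filter_dist_eq_add_one_le_two (hG : G.Connected) (hdeg : ∀ v, G.degree v ≤ 2)
    (v : V) (r : ℕ) : #{u | G.dist u v = r + 1} ≤ 2 := by
  induction r with
  | zero =>
    calc #{u | G.dist u v = 0 + 1} ≤ #(G.neighborFinset v) := by
          refine card_le_card fun u hu => ?_
          simpa [adj_comm] using hu
      _ ≤ 2 := (card_neighborFinset_eq_degree G v).trans_le (hdeg v)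
  | succ r ih =>
    -- sending each vertex to a neighbour one step closer to `v` is injective
    refine le_trans (card_le_card_of_forall_subsingleton G.Adj (fun x hx => ?_) ?_) ih
    · have hxv : x ≠ v := by rintro rfl; simp at hx
      obtain ⟨w, hxw, hw⟩ := hG.exists_adj_dist_add_one_eq hxv
      exact ⟨w, by simp at hx ⊢; omega, hxw⟩
    · intro y hy x hx x' hx'
      simp only [Set.mem_ofPred_eq, mem_filter, mem_univ, true_and] at hy hx hx'
      by_contra hne
      have hyv : y ≠ v := by rintro rfl; simp at hy
      obtain ⟨z, hyz, hz⟩ := hG.exists_adj_dist_add_one_eq hyv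
      rcases eq_or_eq_of_adj_of_degree_le_two (hdeg y) hx.2.symm hx'.2.symm hyz hne with rfl | rfl
        <;> omega

theorem card_filter_dist_le_le (hG : G.Connected) (hdeg : ∀ v, G.degree v ≤ 2) (v : V)
    (r : ℕ) : #{u | G.dist u v ≤ r} ≤ 2 * r + 1 := by
  classical
  induction r with
  | zero =>
    refine card_le_one.mpr fun a ha b hb => ?_
    simp only [mem_filter, mem_univ, true_and, nonpos_iff_eq_zero, hG.dist_eq_zero_iff] at ha hb
    rw [ha, hb]
  | succ r ih =>
    have hsplit : univ.filter (fun u => G.dist u v ≤ r + 1) =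
        univ.filter (fun u => G.dist u v ≤ r) ∪ univ.filter (fun u => G.dist u v = r + 1) := by
      ext u
      simp only [mem_filter, mem_univ, true_and, mem_union]
      omega
    rw [hsplit]
    have := card_filter_dist_eq_add_one_le_two hG hdeg v r
    have := card_union_le (univ.filter fun u => G.dist u v ≤ r)
      (univ.filter fun u => G.dist u v = r + 1)
    omega

end SimpleGraph

namespace Broadcast

open SimpleGraph Finset

variable {V : Type*} {G : SimpleGraph V} {f g : V → ℕ} {u v x : V}

lemma self_mem_hears (hv : 1 ≤ f v) : v ∈ hears G f v := ⟨hv, by simp⟩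

lemma hears_mono (hfg : ∀ v, f v ≤ g v) (u : V) : hears G f u ⊆ hears G g u :=
  fun w hw => ⟨hw.1.trans (hfg w), hw.2.trans (hfg w)⟩

lemma eq_zero_of_hears_eq_empty (hu : hears G f u = ∅) : f u = 0 := by
  by_contra h
  simpa [hu] using self_mem_hears (G := G) (Nat.one_le_iff_ne_zero.mpr h)

lemma mem_hears_of_mem_privateNbhd (hu : u ∈ privateNbhd G f v) : v ∈ hears G f u :=
  (hu : hears G f u = {v}) ▸ rfl

lemma privateBorder_subset_privateNbhd : privateBorder G f v ⊆ privateNbhd G f v := by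
  unfold privateBorder
  split_ifs with h
  · exact h.2.symm.subset
  · exact Set.sep_subset _ _

lemma privateBorder_eq_sep (h : f v = 1 → v ∉ privateNbhd G f v) :
    privateBorder G f v = {u ∈ privateNbhd G f v | G.dist u v = f v} := by
  rw [privateBorder, if_neg]
  rintro ⟨h1, h2⟩
  exact h h1 (h2 ▸ rfl)

lemma privateBorder_nonempty_of_mem (hx : x ∈ privateNbhd G f v) (hd : G.dist x v = f v) :
    (privateBorder G f v).Nonempty := by
  unfold privateBorder
  split_ifs
  · exact Set.singleton_nonempty v
  · exact ⟨x, hx, hd⟩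

lemma privateBorder_nonempty_of_self_mem (hG : G.Connected) (hv : f v = 1)
    (h : v ∈ privateNbhd G f v) : (privateBorder G f v).Nonempty := by
  by_cases hPN : privateNbhd G f v = {v}
  · rw [privateBorder, if_pos ⟨hv, hPN⟩]
    exact Set.singleton_nonempty v
  · obtain ⟨x, hx, hxv⟩ := ((Set.nontrivial_iff_ne_singleton h).mpr hPN).exists_ne v
    refine privateBorder_nonempty_of_mem hx ?_
    have := (mem_hears_of_mem_privateNbhd hx).2
    have := hG.pos_dist_of_ne hxv
    omega

lemma mem_hears_update_one [DecidableEq V] (hfu : f u = 0) {w : V} :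
    w ∈ hears G (Function.update f u 1) x ↔ w ∈ hears G f x ∨ (w = u ∧ G.dist x u ≤ 1) := by
  rcases eq_or_ne w u with rfl | hw
  · simp [hears, hfu]
  · simp [hears, hw]

lemma mem_privateNbhd_update_one [DecidableEq V] (hfu : f u = 0) (hvu : v ≠ u) :
    x ∈ privateNbhd G (Function.update f u 1) v ↔
      x ∈ privateNbhd G f v ∧ ¬ G.dist x u ≤ 1 := by
  simp only [privateNbhd, Set.mem_ofPred_eq, Set.ext_iff, mem_hears_update_one hfu,
    Set.mem_singleton_iff]
  constructor
  · intro h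
    have hxu : ¬ G.dist x u ≤ 1 := fun hd => hvu ((h u).mp (Or.inr ⟨rfl, hd⟩)).symm
    exact ⟨fun w => by simpa [hxu] using h w, hxu⟩
  · rintro ⟨h, hxu⟩ w
    simpa [hxu] using h w

lemma privateBorder_update_one_self_nonempty [DecidableEq V] (hG : G.Connected)
    (hu : hears G f u = ∅) : (privateBorder G (Function.update f u 1) u).Nonempty := by
  refine privateBorder_nonempty_of_self_mem hG (by simp) ?_
  ext w
  rw [mem_hears_update_one (eq_zero_of_hears_eq_empty hu), hu]
  simp

variable [Fintype V]

lemma one_le_ecc [Nontrivial V] (hG : G.Connected) (v : V) : 1 ≤ ecc G v := by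
  obtain ⟨w, hw⟩ := exists_ne v
  exact (hG.pos_dist_of_ne hw.symm).trans_le (le_sup (mem_univ w))

lemma cost_lt_of_le_of_ne (hle : ∀ v, g v ≤ f v) (hne : g ≠ f) : cost g < cost f := by
  obtain ⟨v, hv⟩ := Function.ne_iff.mp hne
  exact sum_lt_sum (fun v _ => hle v) ⟨v, mem_univ v, (hle v).lt_of_ne hv⟩

lemma IsDominating.exists_isMinimalDominating_le (hf : IsDominating G f) :
    ∃ g, IsMinimalDominating G g ∧ ∀ v, g v ≤ f v := by
  obtain ⟨g, ⟨hg, hgf⟩, hmin⟩ := (measure cost).wf.has_min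
    {g | IsDominating G g ∧ ∀ v, g v ≤ f v} ⟨f, hf, fun _ => le_rfl⟩
  refine ⟨g, ⟨hg, fun h hh hhg => ?_⟩, hgf⟩
  by_contra hne
  exact hmin h ⟨hh, fun v => (hhg v).trans (hgf v)⟩ (cost_lt_of_le_of_ne hhg hne)

lemma IsMinimalDominating.isIrredundant (hG : G.Connected) (hf : IsMinimalDominating G f) :
    IsIrredundant G f := by
  classical
  refine ⟨hf.1.1, fun v hv => ?_⟩
  by_contra hPB
  -- otherwise lowering `f v` by one still dominates
  set g := Function.update f v (f v - 1)
  have hgf : ∀ w, g w ≤ f w := fun w => by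
    rcases eq_or_ne w v with rfl | hw
    · simp [g]
    · simp [g, hw]
  have hg_of_ne : ∀ u, ∀ w ≠ v, w ∈ hears G f u → w ∈ hears G g u := by
    intro u w hw h
    simpa [hears, g, hw] using h
  have hdom : IsDominating G g := by
    refine ⟨fun w => (hgf w).trans (hf.1.1 w), fun u => ?_⟩
    by_cases hu : u ∈ privateNbhd G f v
    · have hd : G.dist u v ≠ f v := fun hd => hPB (privateBorder_nonempty_of_mem hu hd)
      have huv := (mem_hears_of_mem_privateNbhd hu).2
      have hfv : 2 ≤ f v := by
        by_contra h
        obtain rfl : u = v := hG.dist_eq_zero_iff.mp (by omega)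
        exact hPB (privateBorder_nonempty_of_self_mem hG (by omega) hu)
      refine ⟨v, ?_, ?_⟩ <;> simp only [g, Function.update_self] <;> omega
    · obtain ⟨w, hw, hwv⟩ : ∃ w ∈ hears G f u, w ≠ v := by
        by_contra! h
        exact hu (Set.eq_singleton_iff_nonempty_unique_mem.mpr ⟨hf.1.2 u, h⟩)
      exact ⟨w, hg_of_ne u w hwv hw⟩
  have := congrFun (hf.2 g hdom hgf) v
  simp only [g, Function.update_self] at this
  omega

lemma IsDominating.isMaximalIrredundant (hdom : IsDominating G f) (hirr : IsIrredundant G f) :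
    IsMaximalIrredundant G f := by
  refine ⟨hirr, fun g hg hfg => ?_⟩
  by_contra hne
  obtain ⟨v, hv⟩ : ∃ v, f v < g v := by
    by_contra! h
    exact hne (funext fun v => le_antisymm (h v) (hfg v))
  obtain ⟨p, hp⟩ := hg.2 v (by omega)
  have hpv : v ∈ hears G f p := by
    obtain ⟨w, hw⟩ := hdom.2 p
    have hPN : hears G g p = {v} := privateBorder_subset_privateNbhd hp
    obtain rfl : w = v := by simpa [hPN] using hears_mono hfg p hw
    exact hw
  unfold privateBorder at hp
  split_ifs at hp with hs
  · exact absurd hpv.1 (by omega)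
  · exact absurd hpv.2 (by rw [hp.2]; omega)

theorem IsDominating.exists_isMaximalIrredundant_cost_le (hG : G.Connected)
    (hf : IsDominating G f) : ∃ g, IsMaximalIrredundant G g ∧ cost g ≤ cost f := by
  obtain ⟨g, hg, hgf⟩ := hf.exists_isMinimalDominating_le
  exact ⟨g, hg.1.isMaximalIrredundant (hg.isIrredundant hG), sum_le_sum fun v _ => hgf v⟩

lemma isBroadcast_update_one [DecidableEq V] [Nontrivial V] (hG : G.Connected)
    (hf : IsBroadcast G f) (u : V) : IsBroadcast G (Function.update f u 1) := fun w => by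
  rcases eq_or_ne w u with rfl | hw
  · simpa using one_le_ecc hG w
  · simpa [hw] using hf w

theorem IsMaximalIrredundant.exists_privateBorder_subset_neighborSet [Nontrivial V]
    (hG : G.Connected) (hf : IsMaximalIrredundant G f) (hu : hears G f u = ∅) :
    ∃ v, 1 ≤ f v ∧ privateBorder G f v ⊆ G.neighborSet u ∧
      (f v = 1 → (hears G f v).Nontrivial) := by
  classical
  have hfu := eq_zero_of_hears_eq_empty hu
  set g := Function.update f u 1
  have hfg : ∀ w, f w ≤ g w := le_update_self_iff.mpr (by omega)
  have hgf : g ≠ f := fun h => by simpa [g, hfu] using congrFun h u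
  obtain ⟨v, hgv1, hvPB⟩ : ∃ v, 1 ≤ g v ∧ ¬ (privateBorder G g v).Nonempty := by
    by_contra! h
    exact hgf (hf.2 g ⟨isBroadcast_update_one hG hf.1.1 u, h⟩ hfg)
  have hvu : v ≠ u := by
    rintro rfl
    exact hvPB (privateBorder_update_one_self_nonempty hG hu)
  have hgv : g v = f v := Function.update_of_ne hvu _ _
  have hfv : 1 ≤ f v := hgv ▸ hgv1
  have hvu_far : ¬ G.dist v u ≤ 1 := fun h => by
    have : v ∈ hears G f u := ⟨hfv, by rw [SimpleGraph.dist_comm]; omega⟩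
    simp [hu] at this
  have hns : f v = 1 → v ∉ privateNbhd G f v := fun h1 hv =>
    hvPB (privateBorder_nonempty_of_self_mem hG (hgv ▸ h1)
      ((mem_privateNbhd_update_one hfu hvu).mpr ⟨hv, hvu_far⟩))
  refine ⟨v, hfv, fun p hp => ?_,
    fun h1 => (Set.nontrivial_iff_ne_singleton (self_mem_hears hfv)).mpr (hns h1)⟩
  rw [privateBorder_eq_sep hns] at hp
  obtain ⟨hpPN, hpv⟩ := hp
  have hpu : G.dist p u ≤ 1 := by
    by_contra h
    exact hvPB (privateBorder_nonempty_of_mem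
      ((mem_privateNbhd_update_one hfu hvu).mpr ⟨hpPN, h⟩) (hgv ▸ hpv))
  rcases hG.dist_le_one_iff.mp hpu with rfl | hadj
  · exact absurd (hu.symm.trans hpPN) (Set.singleton_ne_empty v).symm
  · exact hadj.symm

lemma card_dominated_add_card_le_sum_card_hears [DecidablePred fun u => (hears G f u).Nonempty]
    [DecidableRel fun u v => v ∈ hears G f u] (S : Finset V)
    (hS : ∀ u ∈ S, (hears G f u).Nontrivial) :
    #{u | (hears G f u).Nonempty} + #S ≤ ∑ u, #{v | v ∈ hears G f u} := by
  classical
  rw [card_filter, ← filter_univ_mem S, card_filter, ← sum_add_distrib]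
  refine sum_le_sum fun u _ => ?_
  have hS' : u ∈ S → 1 < #{v | v ∈ hears G f u} := fun hu => by
    obtain ⟨a, ha, b, hb, hab⟩ := hS u hu
    exact one_lt_card.mpr ⟨a, by simpa using ha, b, by simpa using hb, hab⟩
  split_ifs with hne hu hu
  · exact hS' hu
  · obtain ⟨w, hw⟩ := hne
    exact card_pos.mpr ⟨w, by simpa using hw⟩
  · have := hS' hu
    omega
  · exact Nat.zero_le _

section MaxDegreeTwo

variable [DecidableRel G.Adj]

theorem eq_of_adj_of_hears_eq_empty (hG : G.Connected) (hdeg : ∀ v, G.degree v ≤ 2)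
    {p u' : V} (hp : v ∈ hears G f p) (hu : hears G f u = ∅) (hu' : hears G f u' = ∅)
    (hup : G.Adj u p) (hu'p : G.Adj u' p) : u = u' := by
  by_contra hne
  by_cases hpv : p = v
  · subst hpv
    have : p ∈ hears G f u := ⟨hp.1, by rw [dist_eq_one_iff_adj.mpr hup]; exact hp.1⟩
    simp [hu] at this
  · -- the neighbour of `p` one step closer to `v` hears `v`, yet it must be `u` or `u'`
    obtain ⟨w, hpw, hw⟩ := hG.exists_adj_dist_add_one_eq hpv
    have hwv : v ∈ hears G f w := ⟨hp.1, by have := hp.2; omega⟩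
    rcases eq_or_eq_of_adj_of_degree_le_two (hdeg p) hup.symm hu'p.symm hpw hne with rfl | rfl
    · simp [hu] at hwv
    · simp [hu'] at hwv

lemma sum_card_heard_add_card_le (hG : G.Connected) (hdeg : ∀ v, G.degree v ≤ 2)
    [DecidableRel fun u v => v ∈ hears G f u] (S : Finset V) (hS : ∀ v ∈ S, 2 ≤ f v) :
    ∑ v, #{u | v ∈ hears G f u} + #S ≤ 3 * cost f := by
  classical
  rw [← filter_univ_mem S, card_filter, ← sum_add_distrib, cost, mul_sum]
  refine sum_le_sum fun v _ => ?_
  rcases Nat.eq_zero_or_pos (f v) with h0 | hpos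
  · have : #{u | v ∈ hears G f u} = 0 :=
      card_eq_zero.mpr (filter_eq_empty_iff.mpr fun u _ h => by have := h.1; omega)
    split_ifs with hv
    · have := hS v hv
      omega
    · omega
  · have hball : #{u | v ∈ hears G f u} ≤ 2 * f v + 1 :=
      (card_le_card (monotone_filter_right _ fun u _ h => h.2)).trans
        (card_filter_dist_le_le hG hdeg v (f v))
    split_ifs with hv
    · have := hS v hv
      omega
    · omega

theorem IsMaximalIrredundant.card_le_three_mul_cost [Nontrivial V] (hG : G.Connected)
    (hdeg : ∀ v, G.degree v ≤ 2) (hf : IsMaximalIrredundant G f) :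
    Fintype.card V ≤ 3 * cost f := by
  classical
  set U : Finset V := {u | ¬ (hears G f u).Nonempty}
  have hU : ∀ u ∈ U, hears G f u = ∅ :=
    fun u hu => Set.not_nonempty_iff_eq_empty.mp (mem_filter.mp hu).2
  choose! β hβf hβadj hβnt using fun u hu =>
    hf.exists_privateBorder_subset_neighborSet hG (hU u hu)
  have hinj : Set.InjOn β U := by
    intro u hu u' hu' h
    obtain ⟨p, hp⟩ := hf.1.2 (β u) (hβf u hu)
    exact eq_of_adj_of_hears_eq_empty hG hdeg
      (mem_hears_of_mem_privateNbhd (privateBorder_subset_privateNbhd hp))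
      (hU u hu) (hU u' hu') (hβadj u hu hp) (hβadj u' hu' (h ▸ hp))
  set B₁ := (U.image β).filter (f · = 1)
  set B₂ := (U.image β).filter (¬ f · = 1)
  have hcard : Fintype.card V = #{u | (hears G f u).Nonempty} + #B₁ + #B₂ := by
    rw [add_assoc, card_filter_add_card_filter_not, card_image_of_injOn hinj,
      card_filter_add_card_filter_not, card_univ]
  have hB₁ : ∀ v ∈ B₁, (hears G f v).Nontrivial := by
    intro v hv
    obtain ⟨hv, hv1⟩ := mem_filter.mp hv
    obtain ⟨u, hu, rfl⟩ := mem_image.mp hv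
    exact hβnt u hu hv1
  have hB₂ : ∀ v ∈ B₂, 2 ≤ f v := by
    intro v hv
    obtain ⟨hv, hv1⟩ := mem_filter.mp hv
    obtain ⟨u, hu, rfl⟩ := mem_image.mp hv
    have := hβf u hu
    omega
  have hdouble : ∑ u, #{v | v ∈ hears G f u} = ∑ v, #{u | v ∈ hears G f u} :=
    sum_card_bipartiteAbove_eq_sum_card_bipartiteBelow _
  have := card_dominated_add_card_le_sum_card_hears B₁ hB₁
  have := sum_card_heard_add_card_le hG hdeg B₂ hB₂
  omega

end MaxDegreeTwo

lemma broadcastDomination_le (hf : IsDominating G f) : broadcastDomination G ≤ cost f :=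
  Nat.sInf_le (s := {c | ∃ f, IsDominating G f ∧ cost f = c}) ⟨f, hf, rfl⟩

lemma broadcastIrredundance_le (hG : G.Connected) (hf : IsDominating G f) :
    broadcastIrredundance G ≤ cost f := by
  obtain ⟨g, hg, hgf⟩ := hf.exists_isMaximalIrredundant_cost_le hG
  exact (Nat.sInf_le (s := {c | ∃ f, IsMaximalIrredundant G f ∧ cost f = c}) ⟨g, hg, rfl⟩).trans
    hgf

variable [Nontrivial V] [DecidableRel G.Adj]

lemma card_le_three_mul_broadcastIrredundance (hG : G.Connected) (hdeg : ∀ v, G.degree v ≤ 2)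
    (hf : IsDominating G f) : Fintype.card V ≤ 3 * broadcastIrredundance G := by
  obtain ⟨g, hg, -⟩ := hf.exists_isMaximalIrredundant_cost_le hG
  obtain ⟨g', hg', hcost⟩ :=
    Nat.sInf_mem (s := {c | ∃ f, IsMaximalIrredundant G f ∧ cost f = c}) ⟨_, g, hg, rfl⟩
  rw [broadcastIrredundance, ← hcost]
  exact hg'.card_le_three_mul_cost hG hdeg

lemma card_le_three_mul_broadcastDomination (hG : G.Connected) (hdeg : ∀ v, G.degree v ≤ 2)
    (hf : IsDominating G f) : Fintype.card V ≤ 3 * broadcastDomination G := by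
  obtain ⟨g, hg, hcost⟩ :=
    Nat.sInf_mem (s := {c | ∃ f, IsDominating G f ∧ cost f = c}) ⟨_, f, hf, rfl⟩
  obtain ⟨g', hg', hg'g⟩ := hg.exists_isMaximalIrredundant_cost_le hG
  rw [broadcastDomination, ← hcost]
  exact (hg'.card_le_three_mul_cost hG hdeg).trans (by omega)

def everyThird (n : ℕ) : Fin n → ℕ := fun v => if v.val % 3 = 0 then 1 else 0

lemma cost_everyThird (n : ℕ) : cost (everyThird n) = (n + 2) / 3 := by
  rw [cost, show everyThird n = fun v => if v.val % 3 = 0 then 1 else 0 from rfl,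
    Fin.sum_univ_eq_sum_range (fun i => if i % 3 = 0 then 1 else 0)]
  induction n with
  | zero => rfl
  | succ n ih =>
    rw [sum_range_succ, ih]
    split_ifs <;> omega

lemma isDominating_everyThird (m : ℕ) :
    IsDominating (cycleGraph (m + 2)) (everyThird (m + 2)) := by
  refine ⟨fun v => ?_, fun u => ?_⟩
  · unfold everyThird
    split_ifs
    · exact one_le_ecc cycleGraph_connected v
    · exact Nat.zero_le _
  obtain ⟨v, hv, huv⟩ :
      ∃ v : Fin (m + 2), v.val % 3 = 0 ∧ (cycleGraph (m + 2)).dist u v ≤ 1 := by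
    have hpred : (cycleGraph (m + 2)).dist u (u - 1) ≤ 1 :=
      (dist_eq_one_iff_adj.mpr (cycleGraph_adj.mpr (Or.inl (sub_sub_cancel u 1)))).le
    have hsucc : (cycleGraph (m + 2)).dist u (u + 1) ≤ 1 :=
      (dist_eq_one_iff_adj.mpr (cycleGraph_adj.mpr (Or.inr (add_sub_cancel_left u 1)))).le
    rcases (by omega : u.val % 3 = 0 ∨ u.val % 3 = 1 ∨ u.val % 3 = 2) with h | h | h
    · exact ⟨u, h, by simp⟩
    · refine ⟨u - 1, ?_, hpred⟩
      rw [Fin.coe_sub_one, if_neg (by rintro rfl; simp at h)]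
      omega
    · refine ⟨u + 1, ?_, hsucc⟩
      rw [Fin.val_add_one]
      split_ifs <;> omega
  exact ⟨v, by simp [everyThird, hv], by simpa [everyThird, hv] using huv⟩

end Broadcast

open Broadcast in
/-- For every integer n ≥ 3, ir_b(C_n) = γ_b(C_n) = ⌈n/3⌉. -/
theorem broadcastIrredundance_cycleGraph (n : ℕ) (hn : 3 ≤ n) :
    broadcastIrredundance (SimpleGraph.cycleGraph n) =
      broadcastDomination (SimpleGraph.cycleGraph n) ∧
    broadcastDomination (SimpleGraph.cycleGraph n) = (n + 2) / 3 := by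
  obtain ⟨m, rfl⟩ : ∃ m, n = m + 2 := ⟨n - 2, by omega⟩
  have hG : (SimpleGraph.cycleGraph (m + 2)).Connected := SimpleGraph.cycleGraph_connected
  have hdeg (v : Fin (m + 2)) : (SimpleGraph.cycleGraph (m + 2)).degree v ≤ 2 :=
    SimpleGraph.cycleGraph_degree_two_le.trans_le Finset.card_le_two
  have hf := isDominating_everyThird m
  have hir_le := broadcastIrredundance_le hG hf
  have hγ_le := broadcastDomination_le hf
  have hir_ge := card_le_three_mul_broadcastIrredundance hG hdeg hf
  have hγ_ge := card_le_three_mul_broadcastDomination hG hdeg hf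
  rw [cost_everyThird] at hir_le hγ_le
  rw [Fintype.card_fin] at hir_ge hγ_ge
  omega
end

section
/- For every integer n ≥ 2, the broadcast packing number of the path P_n equals its diameter, i.e. P_b(P_n) = n − 1. -/
/-!
The closed balls `B(v, f v)` around the broadcast vertices of a packing broadcast `f` are
pairwise disjoint, and in a connected graph such a ball has at least `f v + 1` vertices, because
`f v ≤ e(v)` and every distance up to `e(v)` is attained along a shortest path. Hence
`σ(f) + |V_f^+| ≤ |V|`, so `P_b(G) ≤ |V| - 1` for every connected graph. For `P_n` this bound is
attained by an end vertex broadcasting at strength `n - 1`.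
-/

open SimpleGraph

namespace SimpleGraph

variable {V : Type*} {G : SimpleGraph V}

/-- Realised along a shortest walk from `v` to `u`. -/
lemma Preconnected.exists_dist_eq (hG : G.Preconnected) {v u : V} {k : ℕ}
    (hk : k ≤ G.dist v u) : ∃ w, G.dist v w = k := by
  obtain ⟨p, hp⟩ := (hG v u).exists_walk_length_eq_dist
  refine ⟨p.getVert k, ?_⟩
  rw [← length_eq_dist_of_subwalk hp (p.isSubwalk_take k), Walk.take_length]
  omega

lemma Walk.pathGraph_sub_le_length {n : ℕ} {i j : Fin n}
    (p : (pathGraph n).Walk i j) : j.val - i.val ≤ p.length := by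
  induction p with
  | nil => simp
  | cons h p ih =>
    rw [pathGraph_adj] at h
    rw [Walk.length_cons]
    omega

lemma pathGraph_sub_le_dist {n : ℕ} (i j : Fin n) :
    j.val - i.val ≤ (pathGraph n).dist i j := by
  obtain ⟨p, hp⟩ := (pathGraph_preconnected n i j).exists_walk_length_eq_dist
  exact hp ▸ p.pathGraph_sub_le_length

end SimpleGraph

namespace Broadcast

open Finset

variable {V : Type*} [Fintype V] {G : SimpleGraph V}

noncomputable def closedBall (G : SimpleGraph V) (v : V) (r : ℕ) : Finset V :=
  univ.filter fun u => G.dist u v ≤ r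

/-- The set `V_f^+` of `f`-broadcast vertices. -/
def broadcastVertices (f : V → ℕ) : Finset V :=
  univ.filter fun v => 1 ≤ f v

lemma dist_le_ecc (G : SimpleGraph V) (v u : V) : G.dist v u ≤ ecc G v :=
  le_sup (f := G.dist v) (mem_univ u)

lemma exists_dist_eq_ecc (G : SimpleGraph V) (v : V) : ∃ u, G.dist v u = ecc G v := by
  obtain ⟨u, -, hu⟩ := exists_mem_eq_sup univ ⟨v, mem_univ v⟩ (G.dist v)
  exact ⟨u, hu.symm⟩

lemma succ_le_card_closedBall (hG : G.Preconnected) {v : V} {r : ℕ} (hr : r ≤ ecc G v) :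
    r + 1 ≤ #(closedBall G v r) := by
  obtain ⟨u, hu⟩ := exists_dist_eq_ecc G v
  have hdist : range (r + 1) ⊆ (closedBall G v r).image (G.dist v) := by
    intro k hk
    obtain ⟨w, hw⟩ := hG.exists_dist_eq (v := v) (u := u) (k := k) (by simp at hk; omega)
    simp only [mem_image, closedBall, mem_filter, mem_univ, true_and]
    exact ⟨w, by rw [SimpleGraph.dist_comm, hw]; simpa [Nat.lt_succ_iff] using hk, hw⟩
  simpa using (card_le_card hdist).trans card_image_le

lemma cost_eq_sum_broadcastVertices (f : V → ℕ) : cost f = ∑ v ∈ broadcastVertices f, f v := by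
  rw [cost, broadcastVertices, sum_filter_of_ne]
  intro v _ hv
  omega

lemma IsPacking.disjoint_closedBall {f : V → ℕ} (hf : IsPacking G f) {v w : V}
    (hv : v ∈ broadcastVertices f) (hw : w ∈ broadcastVertices f) (hvw : v ≠ w) :
    Disjoint (closedBall G v (f v)) (closedBall G w (f w)) := by
  simp only [broadcastVertices, mem_filter, mem_univ, true_and] at hv hw
  refine disjoint_left.2 fun u hu hu' => hvw (hf.2 u ⟨hv, ?_⟩ ⟨hw, ?_⟩)
  · simpa [closedBall] using hu
  · simpa [closedBall] using hu'

lemma IsPacking.cost_add_card_le (hG : G.Preconnected) {f : V → ℕ} (hf : IsPacking G f) :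
    cost f + #(broadcastVertices f) ≤ Fintype.card V := by
  classical
  calc cost f + #(broadcastVertices f) = ∑ v ∈ broadcastVertices f, (f v + 1) := by
        simp [cost_eq_sum_broadcastVertices, sum_add_distrib]
    _ ≤ ∑ v ∈ broadcastVertices f, #(closedBall G v (f v)) :=
        sum_le_sum fun v _ => succ_le_card_closedBall hG (hf.1 v)
    _ = #((broadcastVertices f).biUnion fun v => closedBall G v (f v)) :=
        (card_biUnion fun _ hv _ hw hvw => hf.disjoint_closedBall hv hw hvw).symm
    _ ≤ Fintype.card V := card_le_univ _

lemma IsPacking.cost_le (hG : G.Preconnected) {f : V → ℕ} (hf : IsPacking G f) :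
    cost f ≤ Fintype.card V - 1 := by
  have hle := hf.cost_add_card_le hG
  rcases (broadcastVertices f).eq_empty_or_nonempty with hempty | hne
  · simp [cost_eq_sum_broadcastVertices, hempty]
  · have := hne.card_pos
    omega

lemma IsBroadcast.cost_le {f : V → ℕ} (hf : IsBroadcast G f) : cost f ≤ ∑ v, ecc G v :=
  sum_le_sum fun v _ => hf v

lemma broadcastPacking_le_card_sub_one (hG : G.Preconnected) :
    broadcastPacking G ≤ Fintype.card V - 1 :=
  csSup_le' fun _ ⟨_, hf, hc⟩ => hc ▸ hf.cost_le hG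

lemma isPacking_single [DecidableEq V] {v : V} {k : ℕ} (hk : k ≤ ecc G v) :
    IsPacking G (Pi.single v k) := by
  refine ⟨fun w => ?_, fun u => (Set.subsingleton_singleton (a := v)).anti fun w hw => ?_⟩
  · by_cases hw : w = v
    · subst hw; simpa using hk
    · simp [hw]
  · by_contra hne
    rw [Set.mem_singleton_iff] at hne
    simp [hears, hne] at hw

lemma bddAbove_packingCosts (G : SimpleGraph V) :
    BddAbove {c | ∃ f, IsPacking G f ∧ cost f = c} :=
  ⟨∑ v, ecc G v, fun _ ⟨_, hf, hc⟩ => hc ▸ hf.1.cost_le⟩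

lemma ecc_le_broadcastPacking (G : SimpleGraph V) (v : V) : ecc G v ≤ broadcastPacking G := by
  classical
  exact le_csSup (bddAbove_packingCosts G) ⟨_, isPacking_single (v := v) le_rfl, by simp [cost]⟩

end Broadcast

open Broadcast in
theorem broadcastPacking_pathGraph_general (n : ℕ) :
    broadcastPacking (SimpleGraph.pathGraph n) = n - 1 := by
  refine le_antisymm ?_ ?_
  · simpa using broadcastPacking_le_card_sub_one (pathGraph_preconnected n)
  · cases n with
    | zero => exact Nat.zero_le _
    | succ m =>
      calc m + 1 - 1 = (Fin.last m).val - (0 : Fin (m + 1)).val := by simp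
        _ ≤ (pathGraph (m + 1)).dist 0 (Fin.last m) := pathGraph_sub_le_dist _ _
        _ ≤ ecc (pathGraph (m + 1)) 0 := dist_le_ecc _ _ _
        _ ≤ broadcastPacking (pathGraph (m + 1)) := ecc_le_broadcastPacking _ _

open Broadcast in
/-- For every integer n ≥ 2, P_b(P_n) = diam(P_n) = n − 1. -/
theorem broadcastPacking_pathGraph (n : ℕ) (hn : 2 ≤ n) :
    broadcastPacking (SimpleGraph.pathGraph n) = n - 1 :=
  broadcastPacking_pathGraph_general n
end
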